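/- Let G ∈ 𝒢_{0,m2} (no loops, no restriction on the size of m2). For a simple ordered 2-path (v1,v2,v3) of G, let b_d(G,(v1,v2,v3)) denote the number of simple ordered 2-paths (u,v,w) of G with {u,v,w} ∩ {v1,v2,v3} = ∅ such that v1u, v2v and v3w are non-edges. Then for every simple ordered 2-path (v1,v2,v3) of G, b_d(G,(v1,v2,v3)) ≥ M_2 − 4·m2·(2Δ−3) − 3Δ³ + 2Δ² + 3Δ − 2. -/

import Mathlib

/-!
A vertex with `s` simple and `t` double neighbours is the middle of `s(s-1)` simple ordered
2-paths, and `d(d-1) ≤ s(s-1) + 2t(2Δ-3)` when `d = s + 2t ≤ Δ`; summing over the vertices, with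
`∑ t = 2 m₂`, there are at least `M₂ - 4 m₂ (2Δ-3)` simple ordered 2-paths. A path `(u, v, w)` that
is not counted by `b_d` has its first vertex in `{v₁, v₃} ∪ N(v₁)`, or its middle vertex equal to
`v₂` or in `N(v₂) ∖ {v₁}`, or its last vertex in `{v₁, v₃} ∪ N(v₃) ∖ {v₂}`. Each family is counted
by choosing the anchored vertex and then two further neighbours, one fewer wherever a neighbour is
already known, and the four counts add up to `3Δ³ - 2Δ² - 3Δ + 2`.
-/

open Finset

theorem Finset.card_le_card_mul_mul_of_injOn {α β : Type*} {s : Finset α} {e : α → β × β × β}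
    (he : Set.InjOn e s) {B : Finset β} {f : β → Finset β} {g : β → β → Finset β} {k₁ k₂ : ℕ}
    (hmem : ∀ a ∈ s, (e a).1 ∈ B ∧ (e a).2.1 ∈ f (e a).1 ∧ (e a).2.2 ∈ g (e a).1 (e a).2.1)
    (hf : ∀ b ∈ B, #(f b) ≤ k₁) (hg : ∀ b ∈ B, ∀ c ∈ f b, #(g b c) ≤ k₂) :
    #s ≤ #B * (k₁ * k₂) := by
  calc #s ≤ #(B.sigma fun b => (f b).sigma (g b)) := by
        refine card_le_card_of_injOn (fun a => ⟨(e a).1, (e a).2.1, (e a).2.2⟩)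
          (fun a ha => by simpa using hmem a ha) fun a ha a' ha' h => he ha ha' ?_
        simp only [Sigma.mk.injEq, heq_eq_eq] at h
        exact Prod.ext h.1 (Prod.ext h.2.1 h.2.2)
    _ = ∑ b ∈ B, ∑ c ∈ f b, #(g b c) := by simp only [card_sigma]
    _ ≤ ∑ _b ∈ B, k₁ * k₂ := sum_le_sum fun b hb =>
        (sum_le_sum (hg b hb)).trans (by rw [sum_const, smul_eq_mul]; gcongr; exact hf b hb)
    _ = #B * (k₁ * k₂) := by rw [sum_const, smul_eq_mul]

theorem Int.mul_sub_one_le_of_add_two_mul_le {s t Δ : ℤ} (ht : 0 ≤ t) (h : s + 2 * t ≤ Δ) :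
    (s + 2 * t) * (s + 2 * t - 1) ≤ s * (s - 1) + 2 * t * (2 * Δ - 3) := by
  have : 0 ≤ t * (t - 1) := by
    rcases ht.eq_or_lt with rfl | ht
    · simp
    · exact mul_nonneg ht.le (by omega)
  nlinarith [mul_le_mul_of_nonneg_left (by linarith : t - 1 ≤ Δ - 1 - s - t) ht]

namespace Multigraph

variable {V : Type*} [Fintype V]

def neighborFinset (m : V → V → ℕ) (v : V) : Finset V := {u | m v u ≠ 0}

def simpleNeighborFinset (m : V → V → ℕ) (v : V) : Finset V := {u | m v u = 1}

def doubleNeighborFinset (m : V → V → ℕ) (v : V) : Finset V := {u | m v u = 2}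

variable {m : V → V → ℕ} {Δ : ℕ}

@[simp] theorem mem_neighborFinset {v u : V} : u ∈ neighborFinset m v ↔ m v u ≠ 0 := by
  simp [neighborFinset]

@[simp] theorem mem_simpleNeighborFinset {v u : V} :
    u ∈ simpleNeighborFinset m v ↔ m v u = 1 := by
  simp [simpleNeighborFinset]

@[simp] theorem mem_doubleNeighborFinset {v u : V} :
    u ∈ doubleNeighborFinset m v ↔ m v u = 2 := by
  simp [doubleNeighborFinset]

theorem simpleNeighborFinset_subset (m : V → V → ℕ) (v : V) :
    simpleNeighborFinset m v ⊆ neighborFinset m v := fun u hu => by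
  simp_all

theorem card_le_sum_of_subset_neighborFinset {v : V} {s : Finset V}
    (hs : s ⊆ neighborFinset m v) : #s ≤ ∑ u, m v u :=
  calc #s = ∑ _u ∈ s, 1 := card_eq_sum_ones s
    _ ≤ ∑ u ∈ s, m v u := sum_le_sum fun u hu => Nat.one_le_iff_ne_zero.2 (by simpa using hs hu)
    _ ≤ ∑ u, m v u := sum_le_sum_of_subset (subset_univ s)

theorem card_neighborFinset_le (hΔ : ∀ v, ∑ u, m v u ≤ Δ) (v : V) :
    #(neighborFinset m v) ≤ Δ :=
  (card_le_sum_of_subset_neighborFinset subset_rfl).trans (hΔ v)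

theorem card_simpleNeighborFinset_le (hΔ : ∀ v, ∑ u, m v u ≤ Δ) (v : V) :
    #(simpleNeighborFinset m v) ≤ Δ :=
  (card_le_sum_of_subset_neighborFinset (simpleNeighborFinset_subset m v)).trans (hΔ v)

theorem sum_eq_card_simpleNeighborFinset_add {v : V} (hle : ∀ u, m v u ≤ 2) :
    ∑ u, m v u = #(simpleNeighborFinset m v) + 2 * #(doubleNeighborFinset m v) := by
  have hpt (u : V) : m v u = (if m v u = 1 then 1 else 0) + 2 * (if m v u = 2 then 1 else 0) := by
    have := hle u
    split_ifs <;> omega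
  rw [sum_congr rfl fun u _ => hpt u, sum_add_distrib, ← mul_sum, sum_boole, sum_boole]
  rfl

theorem ncard_eq_sum_card_doubleNeighborFinset (hloop : ∀ v, m v v = 0) :
    {q : V × V | q.1 ≠ q.2 ∧ m q.1 q.2 = 2}.ncard = ∑ v, #(doubleNeighborFinset m v) := by
  have hset : {q : V × V | q.1 ≠ q.2 ∧ m q.1 q.2 = 2} = ↑({q | m q.1 q.2 = 2} : Finset (V × V)) := by
    ext ⟨v, u⟩
    simp only [Set.mem_ofPred_eq, coe_filter, mem_univ, true_and, and_iff_right_iff_imp]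
    rintro h rfl
    simp [hloop] at h
  rw [hset, Set.ncard_coe_finset, card_filter, Fintype.sum_prod_type]
  exact sum_congr rfl fun v _ => (card_filter _ _).symm

variable [DecidableEq V]

theorem card_simpleNeighborFinset_sdiff_le (hΔ : ∀ v, ∑ u, m v u ≤ Δ) {v x : V}
    {T : Finset V} (hx : x ∈ T) (hvx : m v x ≠ 0) :
    #(simpleNeighborFinset m v \ T) ≤ Δ - 1 := by
  have hsub : insert x (simpleNeighborFinset m v \ T) ⊆ neighborFinset m v :=
    insert_subset (by simpa using hvx) (sdiff_subset.trans (simpleNeighborFinset_subset m v))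
  have := (card_le_sum_of_subset_neighborFinset hsub).trans (hΔ v)
  rw [card_insert_of_notMem fun h => (mem_sdiff.1 h).2 hx] at this
  omega

variable (m) in
def simplePaths : Finset (V × V × V) :=
  {t | t.1 ≠ t.2.1 ∧ t.1 ≠ t.2.2 ∧ t.2.1 ≠ t.2.2 ∧ m t.1 t.2.1 = 1 ∧ m t.2.1 t.2.2 = 1}

@[simp] theorem mem_simplePaths {t : V × V × V} :
    t ∈ simplePaths m ↔
      t.1 ≠ t.2.1 ∧ t.1 ≠ t.2.2 ∧ t.2.1 ≠ t.2.2 ∧ m t.1 t.2.1 = 1 ∧ m t.2.1 t.2.2 = 1 := by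
  simp [simplePaths]

theorem sum_card_offDiag_le_card_simplePaths (hsymm : ∀ u v, m u v = m v u)
    (hloop : ∀ v, m v v = 0) :
    ∑ v, #(simpleNeighborFinset m v).offDiag ≤ #(simplePaths m) := by
  rw [← card_sigma]
  refine card_le_card_of_injOn (fun p => (p.2.1, p.1, p.2.2)) (fun p hp => ?_) ?_
  · obtain ⟨v, a, b⟩ := p
    simp only [mem_coe, mem_sigma, mem_univ, mem_offDiag, mem_simpleNeighborFinset,
      true_and] at hp
    obtain ⟨hva, hvb, hab⟩ := hp
    simp only [mem_coe, mem_simplePaths]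
    refine ⟨?_, hab, ?_, hsymm a v ▸ hva, hvb⟩ <;> rintro rfl <;> simp_all
  · rintro ⟨v, a, b⟩ - ⟨v', a', b'⟩ - h
    simp only [Prod.mk.injEq] at h
    obtain ⟨rfl, rfl, rfl⟩ := h
    rfl

theorem sum_mul_sub_one_le_card_simplePaths (hsymm : ∀ u v, m u v = m v u)
    (hloop : ∀ v, m v v = 0) (hle : ∀ u v, m u v ≤ 2) (hΔ : ∀ v, ∑ u, m v u ≤ Δ) :
    ((∑ v, (∑ u, m v u) * (∑ u, m v u - 1) : ℕ) : ℤ) ≤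
      #(simplePaths m) + 2 * (∑ v, #(doubleNeighborFinset m v) : ℕ) * (2 * Δ - 3) := by
  have hv (v : V) : (((∑ u, m v u) * (∑ u, m v u - 1) : ℕ) : ℤ) ≤
      #(simpleNeighborFinset m v).offDiag + 2 * #(doubleNeighborFinset m v) * (2 * Δ - 3) := by
    have hΔv := hΔ v
    rw [sum_eq_card_simpleNeighborFinset_add (hle v)] at hΔv ⊢
    rw [offDiag_card, Nat.mul_sub_one]
    push_cast [Nat.cast_sub (Nat.le_mul_self _)]
    have := Int.mul_sub_one_le_of_add_two_mul_le (s := #(simpleNeighborFinset m v))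
      (Nat.cast_nonneg #(doubleNeighborFinset m v)) (Δ := Δ) (by exact_mod_cast hΔv)
    linarith
  calc ((∑ v, (∑ u, m v u) * (∑ u, m v u - 1) : ℕ) : ℤ)
      ≤ ∑ v, ((#(simpleNeighborFinset m v).offDiag : ℤ) +
          2 * #(doubleNeighborFinset m v) * (2 * Δ - 3)) := by
        rw [Nat.cast_sum]
        exact sum_le_sum fun v _ => hv v
    _ = (∑ v, #(simpleNeighborFinset m v).offDiag : ℕ) +
          2 * (∑ v, #(doubleNeighborFinset m v) : ℕ) * (2 * Δ - 3) := by
        rw [sum_add_distrib, ← sum_mul, ← mul_sum]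
        push_cast
        rfl
    _ ≤ #(simplePaths m) + 2 * (∑ v, #(doubleNeighborFinset m v) : ℕ) * (2 * Δ - 3) := by
        gcongr
        exact sum_card_offDiag_le_card_simplePaths hsymm hloop

theorem card_filter_fst_mem_le (hsymm : ∀ u v, m u v = m v u) (hΔ : ∀ v, ∑ u, m v u ≤ Δ)
    (B : Finset V) : #{t ∈ simplePaths m | t.1 ∈ B} ≤ #B * (Δ * (Δ - 1)) := by
  refine card_le_card_mul_mul_of_injOn (e := id) (Set.injOn_id _)
    (f := simpleNeighborFinset m) (g := fun b c => simpleNeighborFinset m c \ {b})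
    (fun t ht => ?_) (fun b _ => card_simpleNeighborFinset_le hΔ b) fun b _ c hc => ?_
  · obtain ⟨hP, hB⟩ := mem_filter.1 ht
    obtain ⟨-, h13, -, h12, h23⟩ := mem_simplePaths.1 hP
    exact ⟨hB, mem_simpleNeighborFinset.2 h12,
      mem_sdiff.2 ⟨mem_simpleNeighborFinset.2 h23, notMem_singleton.2 (Ne.symm h13)⟩⟩
  · refine card_simpleNeighborFinset_sdiff_le hΔ (mem_singleton_self b) ?_
    rw [hsymm, mem_simpleNeighborFinset.1 hc]
    exact one_ne_zero

theorem card_le_of_forall_snd_mem (hsymm : ∀ u v, m u v = m v u) (hΔ : ∀ v, ∑ u, m v u ≤ Δ)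
    {S : Finset (V × V × V)} {B : Finset V} {T : V → Finset V} {k : ℕ}
    (hS : ∀ t ∈ S, t ∈ simplePaths m ∧ t.2.1 ∈ B ∧ t.1 ∉ T t.2.1)
    (hk : ∀ b ∈ B, #(simpleNeighborFinset m b \ T b) ≤ k) :
    #S ≤ #B * (k * (Δ - 1)) := by
  refine card_le_card_mul_mul_of_injOn (e := fun t => (t.2.1, t.1, t.2.2)) ?_
    (g := fun b c => simpleNeighborFinset m b \ {c}) (fun t ht => ?_) hk fun b _ c hc => ?_
  · intro t _ t' _ h
    simp only [Prod.mk.injEq] at h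
    exact Prod.ext h.2.1 (Prod.ext h.1 h.2.2)
  · obtain ⟨hP, hB, hT⟩ := hS t ht
    obtain ⟨-, h13, -, h12, h23⟩ := mem_simplePaths.1 hP
    exact ⟨hB, mem_sdiff.2 ⟨mem_simpleNeighborFinset.2 (hsymm _ _ ▸ h12), hT⟩,
      mem_sdiff.2 ⟨mem_simpleNeighborFinset.2 h23, notMem_singleton.2 (Ne.symm h13)⟩⟩
  · refine card_simpleNeighborFinset_sdiff_le hΔ (mem_singleton_self c) ?_
    rw [mem_simpleNeighborFinset.1 (mem_sdiff.1 hc).1]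
    exact one_ne_zero

theorem card_le_of_forall_snd_snd_mem (hsymm : ∀ u v, m u v = m v u)
    (hΔ : ∀ v, ∑ u, m v u ≤ Δ)
    {S : Finset (V × V × V)} {B : Finset V} {T : V → Finset V} {k : ℕ}
    (hS : ∀ t ∈ S, t ∈ simplePaths m ∧ t.2.2 ∈ B ∧ t.2.1 ∉ T t.2.2)
    (hk : ∀ b ∈ B, #(simpleNeighborFinset m b \ T b) ≤ k) :
    #S ≤ #B * (k * (Δ - 1)) := by
  refine card_le_card_mul_mul_of_injOn (e := fun t => (t.2.2, t.2.1, t.1)) ?_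
    (g := fun b c => simpleNeighborFinset m c \ {b}) (fun t ht => ?_) hk fun b _ c hc => ?_
  · intro t _ t' _ h
    simp only [Prod.mk.injEq] at h
    exact Prod.ext h.2.2 (Prod.ext h.2.1 h.1)
  · obtain ⟨hP, hB, hT⟩ := hS t ht
    obtain ⟨-, h13, -, h12, h23⟩ := mem_simplePaths.1 hP
    exact ⟨hB, mem_sdiff.2 ⟨mem_simpleNeighborFinset.2 (hsymm _ _ ▸ h23), hT⟩,
      mem_sdiff.2 ⟨mem_simpleNeighborFinset.2 (hsymm _ _ ▸ h12), notMem_singleton.2 h13⟩⟩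
  · refine card_simpleNeighborFinset_sdiff_le hΔ (mem_singleton_self b) ?_
    rw [hsymm, mem_simpleNeighborFinset.1 (mem_sdiff.1 hc).1]
    exact one_ne_zero

theorem card_filter_snd_eq_le (hsymm : ∀ u v, m u v = m v u) (hΔ : ∀ v, ∑ u, m v u ≤ Δ)
    {v x y : V} (hx : m v x = 1) (hy : m v y = 1) (hxy : x ≠ y) :
    #{t ∈ simplePaths m | t.2.1 = v ∧ t.1 ∉ ({x, y} : Finset V)} ≤ (Δ - 2) * (Δ - 1) := by
  have hpair : {x, y} ⊆ simpleNeighborFinset m v := by simp [insert_subset_iff, hx, hy]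
  refine (card_le_of_forall_snd_mem hsymm hΔ (B := {v}) (T := fun _ => {x, y})
    (fun t ht => ⟨(mem_filter.1 ht).1, mem_singleton.2 (mem_filter.1 ht).2.1,
      (mem_filter.1 ht).2.2⟩)
    (fun b hb => ?_)).trans (by rw [card_singleton, one_mul])
  rw [mem_singleton.1 hb, card_sdiff_of_subset hpair, card_pair hxy]
  exact Nat.sub_le_sub_right (card_simpleNeighborFinset_le hΔ v) 2

theorem card_filter_snd_mem_erase_le (hsymm : ∀ u v, m u v = m v u)
    (hΔ : ∀ v, ∑ u, m v u ≤ Δ) {v x : V} (hx : m v x ≠ 0) :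
    #{t ∈ simplePaths m | t.2.1 ∈ (neighborFinset m v).erase x ∧ t.1 ≠ v} ≤
      (Δ - 1) * ((Δ - 1) * (Δ - 1)) := by
  refine (card_le_of_forall_snd_mem hsymm hΔ (T := fun _ => {v})
    (fun t ht => ⟨(mem_filter.1 ht).1, (mem_filter.1 ht).2.1,
      notMem_singleton.2 (mem_filter.1 ht).2.2⟩)
    (fun b hb => card_simpleNeighborFinset_sdiff_le hΔ (mem_singleton_self v)
      (hsymm b v ▸ mem_neighborFinset.1 (mem_of_mem_erase hb)))).trans
    (Nat.mul_le_mul_right _ ?_)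
  rw [card_erase_of_mem (mem_neighborFinset.2 hx)]
  exact Nat.sub_le_sub_right (card_neighborFinset_le hΔ v) 1

theorem card_filter_snd_snd_mem_le (hsymm : ∀ u v, m u v = m v u)
    (hΔ : ∀ v, ∑ u, m v u ≤ Δ) {v₁ v₂ v₃ : V} (h₁₂ : m v₁ v₂ ≠ 0) (h₃₂ : m v₃ v₂ ≠ 0) :
    #{t ∈ simplePaths m | t.2.2 ∈ insert v₁ (insert v₃ ((neighborFinset m v₃).erase v₂)) ∧
        t.2.1 ∉ ({v₂, v₃} : Finset V)} ≤ (Δ + 1) * ((Δ - 1) * (Δ - 1)) := by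
  refine (card_le_of_forall_snd_snd_mem hsymm hΔ (T := fun _ => {v₂, v₃})
    (fun t ht => ⟨(mem_filter.1 ht).1, (mem_filter.1 ht).2⟩) (fun b hb => ?_)).trans
    (Nat.mul_le_mul_right _ ?_)
  · rcases mem_insert.1 hb with rfl | hb
    · exact card_simpleNeighborFinset_sdiff_le hΔ (mem_insert_self v₂ _) h₁₂
    rcases mem_insert.1 hb with rfl | hb
    · exact card_simpleNeighborFinset_sdiff_le hΔ (mem_insert_self v₂ _) h₃₂
    · exact card_simpleNeighborFinset_sdiff_le hΔ (by simp)
        (hsymm b v₃ ▸ mem_neighborFinset.1 (mem_of_mem_erase hb))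
  · refine (card_insert_le _ _).trans (Nat.add_le_add_right (card_insert_le _ _) 1) |>.trans ?_
    have := card_erase_add_one (mem_neighborFinset.2 h₃₂)
    have := card_neighborFinset_le hΔ v₃
    omega

variable (m) in
def IsFarFrom (v₁ v₂ v₃ : V) (t : V × V × V) : Prop :=
  t.1 ≠ v₁ ∧ t.1 ≠ v₂ ∧ t.1 ≠ v₃ ∧ t.2.1 ≠ v₁ ∧ t.2.1 ≠ v₂ ∧ t.2.1 ≠ v₃ ∧
    t.2.2 ≠ v₁ ∧ t.2.2 ≠ v₂ ∧ t.2.2 ≠ v₃ ∧ m v₁ t.1 = 0 ∧ m v₂ t.2.1 = 0 ∧ m v₃ t.2.2 = 0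

instance (v₁ v₂ v₃ : V) : DecidablePred (IsFarFrom m v₁ v₂ v₃) := fun _ => by
  unfold IsFarFrom; infer_instance

/-- A path `(u, v, w)` lands in the first family unless `u` is far; then `v ≠ v₁`, so it lands
in the second or third family unless `v` is far too; then `w ≠ v₂`. -/
theorem filter_not_isFarFrom_subset (hsymm : ∀ u v, m u v = m v u) {v₁ v₂ v₃ : V}
    (h₁₂ : m v₁ v₂ = 1) (h₂₃ : m v₂ v₃ = 1) :
    {t ∈ simplePaths m | ¬IsFarFrom m v₁ v₂ v₃ t} ⊆
      {t ∈ simplePaths m | t.1 ∈ insert v₁ (insert v₃ (neighborFinset m v₁))} ∪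
      {t ∈ simplePaths m | t.2.1 = v₂ ∧ t.1 ∉ ({v₁, v₃} : Finset V)} ∪
      {t ∈ simplePaths m | t.2.1 ∈ (neighborFinset m v₂).erase v₁ ∧ t.1 ≠ v₂} ∪
      {t ∈ simplePaths m | t.2.2 ∈ insert v₁ (insert v₃ ((neighborFinset m v₃).erase v₂)) ∧
        t.2.1 ∉ ({v₂, v₃} : Finset V)} := by
  rintro ⟨u, v, w⟩ ht
  obtain ⟨hP, hfar⟩ := mem_filter.1 ht
  rw [mem_simplePaths] at hP
  unfold IsFarFrom at hfar
  simp only [mem_union, mem_filter, mem_simplePaths, mem_insert, mem_singleton, mem_erase,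
    mem_neighborFinset]
  grind

theorem card_filter_not_isFarFrom_le (hsymm : ∀ u v, m u v = m v u)
    (hΔ : ∀ v, ∑ u, m v u ≤ Δ) {v₁ v₂ v₃ : V} (h₁₂ : m v₁ v₂ = 1) (h₂₃ : m v₂ v₃ = 1)
    (h₁₃ : v₁ ≠ v₃) :
    (#{t ∈ simplePaths m | ¬IsFarFrom m v₁ v₂ v₃ t} : ℤ) ≤ 3 * Δ ^ 3 - 2 * Δ ^ 2 - 3 * Δ + 2 := by
  have h₂₁ : m v₂ v₁ = 1 := hsymm v₂ v₁ ▸ h₁₂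
  have h₃₂ : m v₃ v₂ = 1 := hsymm v₃ v₂ ▸ h₂₃
  have hΔ₂ : 2 ≤ Δ := card_pair h₁₃ ▸ (card_le_card (by simp [insert_subset_iff, h₂₁, h₂₃] :
    {v₁, v₃} ⊆ simpleNeighborFinset m v₂)).trans (card_simpleNeighborFinset_le hΔ v₂)
  have hfst : #(insert v₁ (insert v₃ (neighborFinset m v₁))) ≤ Δ + 2 :=
    (card_insert_le _ _).trans (Nat.add_le_add_right (card_insert_le _ _) 1) |>.trans
      (by have := card_neighborFinset_le hΔ v₁; omega)
  have hcover := (card_le_card (filter_not_isFarFrom_subset hsymm h₁₂ h₂₃)).trans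
    ((card_union_le _ _).trans (Nat.add_le_add_right ((card_union_le _ _).trans
      (Nat.add_le_add_right (card_union_le _ _) _)) _))
  have hnat : #{t ∈ simplePaths m | ¬IsFarFrom m v₁ v₂ v₃ t} ≤
      (Δ + 2) * (Δ * (Δ - 1)) + (Δ - 2) * (Δ - 1) + (Δ - 1) * ((Δ - 1) * (Δ - 1)) +
        (Δ + 1) * ((Δ - 1) * (Δ - 1)) :=
    hcover.trans (add_le_add (add_le_add (add_le_add
      ((card_filter_fst_mem_le hsymm hΔ _).trans (Nat.mul_le_mul_right _ hfst))
      (card_filter_snd_eq_le hsymm hΔ h₂₁ h₂₃ h₁₃))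
      (card_filter_snd_mem_erase_le hsymm hΔ (x := v₁) (by omega)))
      (card_filter_snd_snd_mem_le hsymm hΔ (by omega) (by omega)))
  have hcast := (Nat.cast_le (α := ℤ)).2 hnat
  push_cast [Nat.cast_sub (by omega : 1 ≤ Δ), Nat.cast_sub hΔ₂] at hcast
  linarith

end Multigraph

open Multigraph

theorem bd_path_lower_general (n : ℕ) (d : Fin n → ℕ) (mG : Fin n → Fin n → ℕ)
    (M2 Δ m2 : ℕ)
    (hM2 : M2 = ∑ i, d i * (d i - 1))
    (hΔ : Δ = Finset.univ.sup d)
    (hsymm : ∀ u v, mG u v = mG v u)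
    (hdeg : ∀ v, (∑ u ∈ Finset.univ.filter (fun u => u ≠ v), mG v u)
        + 2 * mG v v = d v)
    (hloop : ∀ v, mG v v = 0)
    (hmul : ∀ u v, u ≠ v → mG u v ≤ 2)
    (hm2 : 2 * m2 = Set.ncard {q : Fin n × Fin n | q.1 ≠ q.2 ∧ mG q.1 q.2 = 2})
    (v1 v2 v3 : Fin n)
    (hdist : v1 ≠ v2 ∧ v1 ≠ v3 ∧ v2 ≠ v3)
    (hpath : mG v1 v2 = 1 ∧ mG v2 v3 = 1)
    (bd1 : ℕ)
    (hbd1 : bd1 = Set.ncard {t : Fin n × Fin n × Fin n |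
      t.1 ≠ t.2.1 ∧ t.1 ≠ t.2.2 ∧ t.2.1 ≠ t.2.2 ∧
      mG t.1 t.2.1 = 1 ∧ mG t.2.1 t.2.2 = 1 ∧
      t.1 ≠ v1 ∧ t.1 ≠ v2 ∧ t.1 ≠ v3 ∧
      t.2.1 ≠ v1 ∧ t.2.1 ≠ v2 ∧ t.2.1 ≠ v3 ∧
      t.2.2 ≠ v1 ∧ t.2.2 ≠ v2 ∧ t.2.2 ≠ v3 ∧
      mG v1 t.1 = 0 ∧ mG v2 t.2.1 = 0 ∧ mG v3 t.2.2 = 0}) :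
    (M2 : ℝ) - 4 * m2 * (2 * Δ - 3) - 3 * Δ ^ 3 + 2 * Δ ^ 2 + 3 * Δ - 2
      ≤ (bd1 : ℝ) := by
  have hd (v : Fin n) : ∑ u, mG v u = d v := by
    rw [← hdeg v, hloop, mul_zero, add_zero, filter_ne', sum_erase _ (hloop v)]
  have hle (u v : Fin n) : mG u v ≤ 2 := by
    rcases eq_or_ne u v with rfl | huv
    · simp [hloop]
    · exact hmul u v huv
  have hΔ' (v : Fin n) : ∑ u, mG v u ≤ Δ := hd v ▸ hΔ ▸ le_sup (mem_univ v)
  have hpaths := sum_mul_sub_one_le_card_simplePaths hsymm hloop hle hΔ'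
  simp only [hd, ← hM2, ← ncard_eq_sum_card_doubleNeighborFinset hloop, ← hm2] at hpaths
  have hbad := card_filter_not_isFarFrom_le hsymm hΔ' hpath.1 hpath.2 hdist.2.1
  have hbd : bd1 = #{t ∈ simplePaths mG | IsFarFrom mG v1 v2 v3 t} := by
    rw [hbd1, ← Set.ncard_coe_finset]
    congr 1
    ext t
    rw [mem_coe, mem_filter, mem_simplePaths, IsFarFrom]
    simp only [Set.mem_ofPred_eq, and_assoc]
  have hsplit := card_filter_add_card_filter_not (s := simplePaths mG) (IsFarFrom mG v1 v2 v3)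
  rw [← hbd] at hsplit
  have : (M2 : ℤ) - 4 * m2 * (2 * Δ - 3) - 3 * Δ ^ 3 + 2 * Δ ^ 2 + 3 * Δ - 2 ≤ bd1 := by
    push_cast at hpaths
    linarith [congrArg (Nat.cast (R := ℤ)) hsplit]
  exact_mod_cast this

/-- **Unconditional lower bound on `b_d(G, (v1,v2,v3))`.**
`G ∈ 𝒢_{0,m2}` (loopless, no restriction on `m2`).  For a simple ordered
2-path `(v1,v2,v3)` of `G`, `b_d(G,(v1,v2,v3))` is the number of simple
ordered 2-paths `(u,v,w)` of `G` with `{u,v,w} ∩ {v1,v2,v3} = ∅` such that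
`v1u`, `v2v`, `v3w` are non-edges.  Then
`b_d(G,(v1,v2,v3)) ≥ M₂ − 4·m2·(2Δ−3) − 3Δ³ + 2Δ² + 3Δ − 2`. -/
theorem bd_path_lower (n : ℕ) (d : Fin n → ℕ) (mG : Fin n → Fin n → ℕ)
    (M M2 Δ m2 : ℕ)
    (hM : M = ∑ i, d i)
    (hM2 : M2 = ∑ i, d i * (d i - 1))
    (hΔ : Δ = Finset.univ.sup d)
    (hsymm : ∀ u v, mG u v = mG v u)
    (hdeg : ∀ v, (∑ u ∈ Finset.univ.filter (fun u => u ≠ v), mG v u)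
        + 2 * mG v v = d v)
    (hloop : ∀ v, mG v v = 0)
    (hmul : ∀ u v, u ≠ v → mG u v ≤ 2)
    (hm2 : 2 * m2 = Set.ncard {q : Fin n × Fin n | q.1 ≠ q.2 ∧ mG q.1 q.2 = 2})
    (v1 v2 v3 : Fin n)
    (hdist : v1 ≠ v2 ∧ v1 ≠ v3 ∧ v2 ≠ v3)
    (hpath : mG v1 v2 = 1 ∧ mG v2 v3 = 1)
    (bd1 : ℕ)
    (hbd1 : bd1 = Set.ncard {t : Fin n × Fin n × Fin n |
      t.1 ≠ t.2.1 ∧ t.1 ≠ t.2.2 ∧ t.2.1 ≠ t.2.2 ∧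
      mG t.1 t.2.1 = 1 ∧ mG t.2.1 t.2.2 = 1 ∧
      t.1 ≠ v1 ∧ t.1 ≠ v2 ∧ t.1 ≠ v3 ∧
      t.2.1 ≠ v1 ∧ t.2.1 ≠ v2 ∧ t.2.1 ≠ v3 ∧
      t.2.2 ≠ v1 ∧ t.2.2 ≠ v2 ∧ t.2.2 ≠ v3 ∧
      mG v1 t.1 = 0 ∧ mG v2 t.2.1 = 0 ∧ mG v3 t.2.2 = 0}) :
    (M2 : ℝ) - 4 * m2 * (2 * Δ - 3) - 3 * Δ ^ 3 + 2 * Δ ^ 2 + 3 * Δ - 2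
      ≤ (bd1 : ℝ) :=
  bd_path_lower_general n d mG M2 Δ m2 hM2 hΔ hsymm hdeg hloop hmul hm2 v1 v2 v3 hdist hpath bd1
    hbd1
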